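/- For every nonnegative integer n, Σ_{j=0}^{n} q^{-j(n+1)} / (q;q)_j = (-1)^{n+1} q^{(n+2)(n+1)/2} / (q;q)_{n+1} · Σ_{j=-n-1}^{n} (-1)^j q^{-j(3j+1)/2}, as an identity of rational functions in q. -/

import Mathlib

/-!
Multiplied by `(q;q)_{n+1}`, both sides become sequences `M_n` with `M_0 = 1 - q` and
`M_{n+1} = -q^{n+2} (M_n + q^{-(n+1)^2} - q^{-(n+2)^2})`.
For the left side this is the functional equation `(1 - x) E_m(x) = E_m(q x) - x^{m+1}/(q;q)_m`
of the truncated `q`-exponential `E_m(x) = ∑_{j ≤ m} x^j/(q;q)_j`, taken at `x = q^{-(n+2)}`.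
For the right side, passing from `n` to `n + 1` adds the pentagonal terms `j = n + 1` and
`j = -n - 2`, and since `j(3j+1)/2 = j(j+1)/2 + j^2` the factor `q^{(n+1)(n+2)/2}` turns them
into `±q^{-(n+1)^2}` and `±q^{-(n+2)^2}`.
-/

/-- Finite q-Pochhammer symbol `(a;q)_n`. -/
noncomputable def qp (a q : ℂ) (n : ℕ) : ℂ := ∏ k ∈ Finset.range n, (1 - a * q ^ k)

open Finset

theorem qp_succ (a q : ℂ) (n : ℕ) : qp a q (n + 1) = qp a q n * (1 - a * q ^ n) :=
  prod_range_succ _ _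

theorem one_sub_pow_ne_zero {q : ℂ} (hq : ‖q‖ < 1) {k : ℕ} (hk : k ≠ 0) :
    1 - q ^ k ≠ 0 := by
  refine sub_ne_zero.mpr fun h => ?_
  have : ‖q ^ k‖ < 1 := by rw [norm_pow]; exact pow_lt_one₀ (norm_nonneg q) hq hk
  simp [← h] at this

theorem qp_self_ne_zero {q : ℂ} (hq : ‖q‖ < 1) (n : ℕ) : qp q q n ≠ 0 :=
  prod_ne_zero_iff.mpr fun k _ => by
    simpa only [← pow_succ'] using one_sub_pow_ne_zero hq k.succ_ne_zero

noncomputable def qExpPartial (q : ℂ) (m : ℕ) (x : ℂ) : ℂ :=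
  ∑ j ∈ range (m + 1), x ^ j / qp q q j

theorem qExpPartial_succ (q : ℂ) (m : ℕ) (x : ℂ) :
    qExpPartial q (m + 1) x = qExpPartial q m x + x ^ (m + 1) / qp q q (m + 1) :=
  sum_range_succ _ _

theorem one_sub_mul_qExpPartial {q : ℂ} (hq : ‖q‖ < 1) (m : ℕ) (x : ℂ) :
    (1 - x) * qExpPartial q m x = qExpPartial q m (q * x) - x ^ (m + 1) / qp q q m := by
  induction m with
  | zero => simp [qExpPartial, qp]
  | succ m ih =>
    have hm := qp_self_ne_zero hq m
    have hd := one_sub_pow_ne_zero hq m.succ_ne_zero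
    rw [qExpPartial_succ, qExpPartial_succ, mul_add, ih, qp_succ, ← pow_succ']
    field_simp
    ring

noncomputable def scaledLhs (q : ℂ) (n : ℕ) : ℂ :=
  qp q q (n + 1) * qExpPartial q n (q ^ (-((n : ℤ) + 1)))

theorem scaledLhs_succ {q : ℂ} (hq : ‖q‖ < 1) (hq0 : q ≠ 0) (n : ℕ) :
    scaledLhs q (n + 1) = -q ^ (n + 2) *
      (scaledLhs q n + q ^ (-((n : ℤ) + 1) ^ 2) - q ^ (-((n : ℤ) + 2) ^ 2)) := by
  set x : ℂ := q ^ (-((n : ℤ) + 2)) with hx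
  have hqx : q * x = q ^ (-((n : ℤ) + 1)) := by
    rw [hx, ← zpow_one_add₀ hq0]; ring_nf
  have hx_inv : q ^ (n + 2) * x = 1 := by
    rw [hx, ← zpow_natCast, ← zpow_add₀ hq0]; push_cast; ring_nf; exact zpow_zero q
  have hpow₁ : (q * x) ^ (n + 1) = q ^ (-((n : ℤ) + 1) ^ 2) := by
    rw [hqx, ← zpow_natCast, ← zpow_mul]; push_cast; ring_nf
  have hpow₂ : x ^ (n + 2) = q ^ (-((n : ℤ) + 2) ^ 2) := by
    rw [hx, ← zpow_natCast, ← zpow_mul]; push_cast; ring_nf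
  have hqp : qp q q (n + 2) = -q ^ (n + 2) * (1 - x) * qp q q (n + 1) := by
    rw [qp_succ]; linear_combination (-qp q q (n + 1)) * hx_inv
  have hP := qp_self_ne_zero hq (n + 1)
  calc scaledLhs q (n + 1)
      = -q ^ (n + 2) * (qp q q (n + 1) * ((1 - x) * qExpPartial q (n + 1) x)) := by
        rw [scaledLhs, show ((n + 1 : ℕ) : ℤ) + 1 = n + 2 by push_cast; ring, ← hx, hqp]
        ring
    _ = _ := by
        rw [one_sub_mul_qExpPartial hq, qExpPartial_succ, hpow₁, hpow₂, scaledLhs, ← hqx]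
        field_simp

noncomputable def pentagonalTerm (q : ℂ) (j : ℤ) : ℂ :=
  (-1 : ℂ) ^ j * q ^ (-(j * (3 * j + 1) / 2))

noncomputable def pentagonalSum (q : ℂ) (n : ℕ) : ℂ :=
  ∑ j ∈ Icc (-(n : ℤ) - 1) n, pentagonalTerm q j

theorem pentagonalSum_succ (q : ℂ) (n : ℕ) :
    pentagonalSum q (n + 1) =
      pentagonalTerm q (-(n : ℤ) - 2) + pentagonalTerm q (n + 1) + pentagonalSum q n := by
  have hIcc : Icc (-((n + 1 : ℕ) : ℤ) - 1) ((n + 1 : ℕ) : ℤ) =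
      insert (-(n : ℤ) - 2) (insert ((n : ℤ) + 1) (Icc (-(n : ℤ) - 1) n)) := by
    ext j; simp only [mem_Icc, mem_insert]; push_cast; omega
  rw [pentagonalSum, hIcc, sum_insert (by simp; omega), sum_insert (by simp), add_assoc]
  rfl

theorem pentagonal_ediv_two (j : ℤ) : j * (3 * j + 1) / 2 = j * (j + 1) / 2 + j ^ 2 := by
  rw [show j * (3 * j + 1) = j * (j + 1) + 2 * j ^ 2 by ring,
    Int.add_mul_ediv_left _ _ two_ne_zero]

theorem zpow_triangular_mul_pentagonalTerm {q : ℂ} (hq0 : q ≠ 0) (j : ℤ) :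
    q ^ (j * (j + 1) / 2) * pentagonalTerm q j = (-1) ^ j * q ^ (-j ^ 2) := by
  rw [pentagonalTerm, pentagonal_ediv_two, mul_left_comm, ← zpow_add₀ hq0]
  ring_nf

noncomputable def scaledRhs (q : ℂ) (n : ℕ) : ℂ :=
  (-1) ^ (n + 1) * q ^ (((n : ℤ) + 1) * ((n : ℤ) + 2) / 2) * pentagonalSum q n

theorem scaledRhs_succ {q : ℂ} (hq0 : q ≠ 0) (n : ℕ) :
    scaledRhs q (n + 1) = -q ^ (n + 2) *
      (scaledRhs q n + q ^ (-((n : ℤ) + 1) ^ 2) - q ^ (-((n : ℤ) + 2) ^ 2)) := by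
  set c : ℤ := ((n : ℤ) + 1) * ((n : ℤ) + 2) / 2 with hc
  have hexp :
      (((n + 1 : ℕ) : ℤ) + 1) * (((n + 1 : ℕ) : ℤ) + 2) / 2 = c + (n + 2 : ℕ) := by
    rw [hc, ← Int.add_mul_ediv_left _ _ two_ne_zero]; push_cast; ring_nf
  have hterm₁ :
      q ^ c * pentagonalTerm q (n + 1) = (-1) ^ (n + 1) * q ^ (-((n : ℤ) + 1) ^ 2) := by
    rw [hc, show ((n : ℤ) + 1) * ((n : ℤ) + 2) = ((n : ℤ) + 1) * ((n : ℤ) + 1 + 1) by ring,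
      zpow_triangular_mul_pentagonalTerm hq0, ← Nat.cast_succ, zpow_natCast]
  have hterm₂ : q ^ c * pentagonalTerm q (-(n : ℤ) - 2) =
      (-1) ^ (n + 2) * q ^ (-((n : ℤ) + 2) ^ 2) := by
    rw [hc, show ((n : ℤ) + 1) * ((n : ℤ) + 2) = (-(n : ℤ) - 2) * (-(n : ℤ) - 2 + 1) by ring,
      zpow_triangular_mul_pentagonalTerm hq0,
      show -(n : ℤ) - 2 = -((n + 2 : ℕ) : ℤ) by push_cast; ring,
      zpow_neg, zpow_natCast, ← inv_pow, inv_neg_one, neg_sq]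
    push_cast; rfl
  have hsign : ((-1 : ℂ) ^ n) ^ 2 = 1 := by rw [← pow_mul, pow_mul', neg_one_sq, one_pow]
  rw [scaledRhs, scaledRhs, hexp, zpow_add₀ hq0, zpow_natCast, pentagonalSum_succ]
  linear_combination (-1) ^ n * q ^ (n + 2) * (hterm₁ + hterm₂)
    - q ^ (n + 2) * (q ^ (-((n : ℤ) + 1) ^ 2) - q ^ (-((n : ℤ) + 2) ^ 2)) * hsign

theorem scaledLhs_eq_scaledRhs {q : ℂ} (hq : ‖q‖ < 1) (hq0 : q ≠ 0) (n : ℕ) :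
    scaledLhs q n = scaledRhs q n := by
  induction n with
  | zero =>
    have hIcc : Icc (-((0 : ℕ) : ℤ) - 1) ((0 : ℕ) : ℤ) = {-1, 0} := by decide
    rw [scaledLhs, scaledRhs, pentagonalSum, hIcc]
    simp [qExpPartial, qp, pentagonalTerm]
    field_simp
    ring
  | succ n ih => rw [scaledLhs_succ hq hq0, scaledRhs_succ hq0, ih]

/-- `Σ_{j=0}^n q^{-j(n+1)}/(q;q)_j
      = (-1)^{n+1} q^{(n+2)(n+1)/2}/(q;q)_{n+1} · Σ_{j=-n-1}^n (-1)^j q^{-j(3j+1)/2}`,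
    as an identity of rational functions (stated for all `q` with `0 < |q| < 1`). -/
theorem stmt9 (n : ℕ) (q : ℂ) (hq : ‖q‖ < 1) (hq0 : q ≠ 0) :
    ∑ j ∈ Finset.range (n + 1), q ^ (-((j : ℤ) * (n + 1))) / qp q q j =
      (-1 : ℂ) ^ (n + 1) * q ^ ((n + 2) * (n + 1) / 2) / qp q q (n + 1) *
        ∑ j ∈ Finset.Icc (-(n : ℤ) - 1) (n : ℤ),
          (-1 : ℂ) ^ j * q ^ (-(j * (3 * j + 1) / 2)) := by
  have hlhs : ∑ j ∈ range (n + 1), q ^ (-((j : ℤ) * (n + 1))) / qp q q j =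
      qExpPartial q n (q ^ (-((n : ℤ) + 1))) :=
    sum_congr rfl fun j _ => by rw [← zpow_natCast, ← zpow_mul]; ring_nf
  have hexp : q ^ ((n + 2) * (n + 1) / 2) = q ^ (((n : ℤ) + 1) * ((n : ℤ) + 2) / 2) := by
    rw [← zpow_natCast, Int.natCast_div]; push_cast; ring_nf
  rw [hlhs, hexp, div_mul_eq_mul_div, eq_div_iff (qp_self_ne_zero hq (n + 1)), mul_comm]
  exact scaledLhs_eq_scaledRhs hq hq0 n
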